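/- arXiv:2305.04894 — 3 statements merged into one kernel-verified Lean document; each statement's English description precedes it below -/
import Mathlib

section
/- Let E and F be Banach spaces over 𝕜 (𝕜 = ℝ or ℂ), let α : E* → F* be a bounded linear bijection, and suppose α admits a preadjoint, i.e. a bounded linear map T : F → E with (α μ)(x) = μ(T x) for all μ ∈ E* and x ∈ F. Then T is an isomorphism of Banach spaces: T is bijective and its inverse T⁻¹ : E → F is bounded. -/
open NormedSpace

/-!
The inverse of `α` is bounded by the open mapping theorem, and testing `x` against a norming
functional `ν = α μ` gives `‖x‖ ≤ ‖α⁻¹‖ ‖T x‖`; so `T` is injective with closed range. A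
functional vanishing on that range is killed by `α`, hence is zero, so by Hahn–Banach the range
is everything.
-/

section

variable {𝕜 E F : Type*} [RCLike 𝕜]
  [NormedAddCommGroup E] [NormedSpace 𝕜 E] [NormedAddCommGroup F] [NormedSpace 𝕜 F]

theorem Submodule.exists_strongDual_vanishing_ne_zero_of_notMem (p : Submodule 𝕜 E)
    [IsClosed (p : Set E)] {y : E} (hy : y ∉ p) :
    ∃ μ : StrongDual 𝕜 E, (∀ x ∈ p, μ x = 0) ∧ μ y ≠ 0 := by
  have hy' : p.mkQL y ≠ 0 := by simpa [Submodule.Quotient.mk_eq_zero] using hy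
  obtain ⟨f, -, hfy⟩ := exists_dual_vector 𝕜 (p.mkQL y) (norm_ne_zero_iff.mpr hy')
  refine ⟨f.comp p.mkQL, fun x hx => ?_, ?_⟩
  · simp [(Submodule.Quotient.mk_eq_zero p).mpr hx]
  · rw [ContinuousLinearMap.comp_apply, hfy]
    exact_mod_cast norm_ne_zero_iff.mpr hy'

variable {α : StrongDual 𝕜 E →L[𝕜] StrongDual 𝕜 F} {T : F →L[𝕜] E}

theorem norm_le_opNorm_mul_norm_preadjoint (hT : ∀ (μ : StrongDual 𝕜 E) (x : F), α μ x = μ (T x))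
    {S : StrongDual 𝕜 F →L[𝕜] StrongDual 𝕜 E} (hS : Function.RightInverse S α) (x : F) :
    ‖x‖ ≤ ‖S‖ * ‖T x‖ := by
  obtain ⟨ν, hν, hνx⟩ := exists_dual_vector'' 𝕜 x
  calc ‖x‖ = ‖S ν (T x)‖ := by rw [← hT, hS ν, hνx, RCLike.norm_ofReal, abs_norm]
    _ ≤ ‖S ν‖ * ‖T x‖ := (S ν).le_opNorm _
    _ ≤ ‖S‖ * ‖T x‖ := by
        gcongr
        exact S.le_of_opNorm_le_of_le le_rfl hν |>.trans_eq (mul_one _)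

theorem surjective_of_preadjoint_of_injective
    (hT : ∀ (μ : StrongDual 𝕜 E) (x : F), α μ x = μ (T x)) (hα : Function.Injective α)
    (hrange : IsClosed (Set.range T)) : Function.Surjective T := by
  intro y
  by_contra hy
  have : IsClosed (LinearMap.range (T : F →ₗ[𝕜] E) : Set E) := by
    rwa [LinearMap.coe_range, ContinuousLinearMap.coe_coe]
  obtain ⟨μ, hμ, hμy⟩ :=
    (LinearMap.range (T : F →ₗ[𝕜] E)).exists_strongDual_vanishing_ne_zero_of_notMem
      (y := y) (by simpa using hy)
  have hαμ : α μ = 0 := by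
    ext x
    simpa [hT] using hμ (T x) ⟨x, rfl⟩
  have hμ0 : μ = 0 := hα (by rw [hαμ, map_zero])
  simp [hμ0] at hμy

end

/-- If a bounded linear bijection `α : E* → F*` admits a preadjoint
`T : F → E`, then `T` is an isomorphism of Banach spaces: it is bijective
with a bounded (continuous) linear inverse. -/
theorem stmt2 {𝕜 E F : Type*} [RCLike 𝕜]
    [NormedAddCommGroup E] [NormedSpace 𝕜 E] [CompleteSpace E]
    [NormedAddCommGroup F] [NormedSpace 𝕜 F] [CompleteSpace F]
    (α : StrongDual 𝕜 E →L[𝕜] StrongDual 𝕜 F) (hα : Function.Bijective α)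
    (T : F →L[𝕜] E) (hT : ∀ (μ : StrongDual 𝕜 E) (x : F), α μ x = μ (T x)) :
    ∃ g : F ≃L[𝕜] E, ∀ x : F, g x = T x := by
  let β := ContinuousLinearEquiv.ofBijective α
    (LinearMap.ker_eq_bot.mpr hα.1) (LinearMap.range_eq_top.mpr hα.2)
  have hT_antilipschitz : AntilipschitzWith ‖(β.symm : StrongDual 𝕜 F →L[𝕜] StrongDual 𝕜 E)‖₊ T :=
    T.antilipschitz_of_bound (norm_le_opNorm_mul_norm_preadjoint hT β.apply_symm_apply)
  have hT_surjective : Function.Surjective T :=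
    surjective_of_preadjoint_of_injective hT hα.1
      (hT_antilipschitz.isClosed_range T.uniformContinuous)
  exact ⟨ContinuousLinearEquiv.ofBijective T
    (LinearMap.ker_eq_bot.mpr hT_antilipschitz.injective)
    (LinearMap.range_eq_top.mpr hT_surjective), fun _ => rfl⟩
end

section
/- Let E and F be Banach spaces over 𝕜 (𝕜 = ℝ or ℂ), let α : E* → F* be a bounded linear bijection, and suppose α admits a preadjoint, i.e. a bounded linear map T : F → E with (α μ)(x) = μ(T x) for all μ ∈ E* and x ∈ F. Then α is a homeomorphism from E* equipped with the weak*-topology σ(E*,E) onto F* equipped with the weak*-topology σ(F*,F); in particular the inverse map α⁻¹ : F* → E* is also weak*-weak*-continuous. -/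
/-!
Since `α` is onto, the open mapping theorem bounds every functional on `F` by a multiple of the
norm of one of its `α`-preimages, which makes `T` bounded below; as `F` is complete, `T` has
closed range. A functional vanishing on that range is sent to `0` by `α`, so it is `0` by
injectivity, and Hahn–Banach forces the range to be all of `E`. Now every weak*-evaluation on
either side factors through an evaluation on the other: `(α μ) y = μ (T y)` and, writing
`x = T y`, `(α⁻¹ ν) x = ν y`. Hence `α` and `α⁻¹` are both weak*-continuous.
-/

open NormedSpace

section

variable {𝕜 E F : Type*} [RCLike 𝕜]
  [NormedAddCommGroup E] [NormedSpace 𝕜 E] [NormedAddCommGroup F] [NormedSpace 𝕜 F]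

theorem Submodule.eq_top_of_isClosed_of_forall_dual_eq_zero {S : Submodule 𝕜 E}
    (hS : IsClosed (S : Set E)) (h : ∀ μ : StrongDual 𝕜 E, (∀ x ∈ S, μ x = 0) → μ = 0) :
    S = ⊤ := by
  have := hS
  refine eq_top_iff'.mpr fun x => ?_
  by_contra hx
  have hqx : ‖S.mkQ x‖ ≠ 0 := norm_ne_zero_iff.mpr ((Quotient.mk_eq_zero S).not.mpr hx)
  obtain ⟨g, -, hgx⟩ := exists_dual_vector 𝕜 (S.mkQ x) hqx
  have hgq : g.comp S.mkQL = 0 := h _ fun y hy => by simp [(Quotient.mk_eq_zero S).mpr hy]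
  have := congrArg (fun μ : StrongDual 𝕜 E => μ x) hgq
  simp only [ContinuousLinearMap.comp_apply, mkQL_apply, hgx] at this
  exact hqx (RCLike.ofReal_eq_zero.mp this)

def IsPreadjoint (α : StrongDual 𝕜 E →L[𝕜] StrongDual 𝕜 F) (T : F →L[𝕜] E) : Prop :=
  ∀ (μ : StrongDual 𝕜 E) (y : F), α μ y = μ (T y)

namespace IsPreadjoint

variable {α : StrongDual 𝕜 E →L[𝕜] StrongDual 𝕜 F} {T : F →L[𝕜] E}

theorem exists_antilipschitzWith (hT : IsPreadjoint α T) (hα : Function.Surjective α) :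
    ∃ K, AntilipschitzWith K T := by
  obtain ⟨C, hC, hpre⟩ := α.exists_preimage_norm_le hα
  refine ⟨C.toNNReal, T.antilipschitz_of_bound fun y => ?_⟩
  rw [Real.coe_toNNReal C hC.le]
  refine norm_le_dual_bound 𝕜 y (by positivity) fun ψ => ?_
  obtain ⟨μ, rfl, hμ⟩ := hpre ψ
  calc ‖α μ y‖ = ‖μ (T y)‖ := by rw [hT]
    _ ≤ ‖μ‖ * ‖T y‖ := μ.le_opNorm _
    _ ≤ C * ‖α μ‖ * ‖T y‖ := by gcongr
    _ = C * ‖T y‖ * ‖α μ‖ := by ring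

theorem surjective [CompleteSpace F] (hT : IsPreadjoint α T) (hα : Function.Bijective α) :
    Function.Surjective T := by
  obtain ⟨K, hK⟩ := hT.exists_antilipschitzWith hα.2
  have hclosed : IsClosed (LinearMap.range (T : F →ₗ[𝕜] E) : Set E) :=
    hK.isClosed_range T.uniformContinuous
  have := Submodule.eq_top_of_isClosed_of_forall_dual_eq_zero hclosed fun μ hμ =>
    hα.1 <| by ext y; simp [hT μ y, hμ (T y) (LinearMap.mem_range_self (T : F →ₗ[𝕜] E) y)]
  exact LinearMap.range_eq_top.mp this

theorem continuous_weakDual (hT : IsPreadjoint α T) :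
    Continuous fun μ : WeakDual 𝕜 E => StrongDual.toWeakDual (α (WeakDual.toStrongDual μ)) :=
  WeakDual.continuous_of_continuous_eval fun y => by
    simpa only [StrongDual.toWeakDual_apply, WeakDual.toStrongDual_apply, hT _ y] using
      WeakDual.eval_continuous (𝕜 := 𝕜) (T y)

theorem continuous_weakDual_of_rightInverse (hT : IsPreadjoint α T)
    (hTsurj : Function.Surjective T)
    {β : StrongDual 𝕜 F → StrongDual 𝕜 E} (hβ : Function.RightInverse β α) :
    Continuous fun ν : WeakDual 𝕜 F => StrongDual.toWeakDual (β (WeakDual.toStrongDual ν)) :=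
  WeakDual.continuous_of_continuous_eval fun x => by
    obtain ⟨y, rfl⟩ := hTsurj x
    simpa only [StrongDual.toWeakDual_apply, WeakDual.toStrongDual_apply, ← hT _ y, hβ _] using
      WeakDual.eval_continuous (𝕜 := 𝕜) y

end IsPreadjoint

end

theorem stmt3_general {𝕜 E F : Type*} [RCLike 𝕜]
    [NormedAddCommGroup E] [NormedSpace 𝕜 E]
    [NormedAddCommGroup F] [NormedSpace 𝕜 F] [CompleteSpace F]
    (α : StrongDual 𝕜 E →L[𝕜] StrongDual 𝕜 F) (hα : Function.Bijective α)
    (T : F →L[𝕜] E) (hT : ∀ (μ : StrongDual 𝕜 E) (x : F), α μ x = μ (T x)) :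
    ∃ h : WeakDual 𝕜 E ≃ₜ WeakDual 𝕜 F,
      ∀ μ : WeakDual 𝕜 E,
        WeakDual.toStrongDual (h μ) = α (WeakDual.toStrongDual μ) := by
  have hT : IsPreadjoint α T := hT
  let e := Equiv.ofBijective α hα
  exact ⟨{ toFun := fun μ => StrongDual.toWeakDual (e (WeakDual.toStrongDual μ))
           invFun := fun ν => StrongDual.toWeakDual (e.symm (WeakDual.toStrongDual ν))
           left_inv := fun μ => by simp
           right_inv := fun ν => by simp
           continuous_toFun := hT.continuous_weakDual
           continuous_invFun :=
             hT.continuous_weakDual_of_rightInverse (hT.surjective hα) e.apply_symm_apply },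
    fun μ => rfl⟩

/-- If a bounded linear bijection `α : E* → F*` admits a preadjoint
`T : F → E`, then `α` is a homeomorphism from `E*` with the weak*-topology
onto `F*` with the weak*-topology (so in particular `α⁻¹` is also
weak*-weak*-continuous). -/
theorem stmt3 {𝕜 E F : Type*} [RCLike 𝕜]
    [NormedAddCommGroup E] [NormedSpace 𝕜 E] [CompleteSpace E]
    [NormedAddCommGroup F] [NormedSpace 𝕜 F] [CompleteSpace F]
    (α : StrongDual 𝕜 E →L[𝕜] StrongDual 𝕜 F) (hα : Function.Bijective α)
    (T : F →L[𝕜] E) (hT : ∀ (μ : StrongDual 𝕜 E) (x : F), α μ x = μ (T x)) :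
    ∃ h : WeakDual 𝕜 E ≃ₜ WeakDual 𝕜 F,
      ∀ μ : WeakDual 𝕜 E,
        WeakDual.toStrongDual (h μ) = α (WeakDual.toStrongDual μ) :=
  stmt3_general α hα T hT
end

section
/- Let A be a Banach algebra (over ℝ or ℂ, not necessarily unital) which has a weak bounded left approximate identity of bound C, i.e. there is a net (e_i)_{i∈I} in A with ‖e_i‖ ≤ C for all i such that μ(e_i a − a) → 0 for every a ∈ A and every continuous linear functional μ ∈ A*. Then A has a bounded left approximate identity of the same bound C, i.e. there is a net (f_j)_{j∈J} in A with ‖f_j‖ ≤ C for all j such that ‖f_j a − a‖ → 0 for every a ∈ A. -/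
/-! For finitely many `a₁, …, aₙ`, the net `(eᵢ a₁, …, eᵢ aₙ)` converges weakly in `Aⁿ` to
`(a₁, …, aₙ)`, so this point lies in the weak closure, hence (Hahn–Banach) in the norm closure, of
the convex set `{(f a₁, …, f aₙ) | f ∈ conv (eᵢ)}`. Thus the identity of `A` is a pointwise limit
of left multiplications by elements of `conv (eᵢ)`, all of norm at most `C`, and any net realizing
this limit is a bounded left approximate identity. -/

open Filter Topology

section
open Set

theorem Filter.exists_directed_net_tendsto {W : Type} {G : Filter W} (hG : G.NeBot) {S : Set W}
    (hS : S ∈ G) :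
    ∃ (J : Type) (_ : Nonempty J) (pre : Preorder J),
      haveI := pre
      IsDirected J (· ≤ ·) ∧ ∃ w : J → W, (∀ j, w j ∈ S) ∧ Tendsto w atTop G := by
  let J := {p : W × Set W // p.2 ∈ G ∧ p.2 ⊆ S ∧ p.1 ∈ p.2}
  let pre : Preorder J := Preorder.lift fun p => OrderDual.toDual p.1.2
  have mk : ∀ U ∈ G, U ⊆ S → ∃ j : J, j.1.2 = U := fun U hU hUS =>
    let ⟨w, hw⟩ := hG.nonempty_of_mem hU
    ⟨⟨(w, U), hU, hUS, hw⟩, rfl⟩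
  have : Nonempty J := let ⟨j, _⟩ := mk S hS subset_rfl; ⟨j⟩
  have : IsDirected J (· ≤ ·) := ⟨fun p q => by
    obtain ⟨r, hr⟩ := mk _ (inter_mem p.2.1 q.2.1) (inter_subset_left.trans p.2.2.1)
    exact ⟨r, hr.trans_subset inter_subset_left, hr.trans_subset inter_subset_right⟩⟩
  refine ⟨J, ‹_›, pre, ‹_›, fun j => j.1.1, fun j => j.2.2.1 j.2.2.2, fun U hU => ?_⟩
  obtain ⟨j, hj⟩ := mk _ (inter_mem hU hS) inter_subset_right
  exact mem_atTop_sets.2 ⟨j, fun k (hk : k.1.2 ⊆ j.1.2) => (hk.trans hj.subset k.2.2.2).1⟩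

theorem Filter.exists_directed_net_tendsto_of_subset_range {Y : Type*} {W : Type} {c : W → Y}
    {S : Set Y} (hS : S ⊆ range c) {F : Filter Y} (hF : (F ⊓ 𝓟 S).NeBot) :
    ∃ (J : Type) (_ : Nonempty J) (pre : Preorder J),
      haveI := pre
      IsDirected J (· ≤ ·) ∧ ∃ f : J → Y, (∀ j, f j ∈ S) ∧ Tendsto f atTop F := by
  obtain ⟨J, hJ, pre, hdir, w, hwS, hw⟩ := exists_directed_net_tendsto
    (hF.comap_of_range_mem (mem_inf_of_right (mem_principal.2 hS)))
    (preimage_mem_comap (m := c) (mem_inf_of_right (mem_principal_self S)))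
  exact ⟨J, hJ, pre, hdir, c ∘ w, hwS, (tendsto_comap.comp hw).mono_right inf_le_left⟩

theorem mem_closure_of_forall_tendsto_dual {𝕜 E : Type*} [RCLike 𝕜] [TopologicalSpace E]
    [AddCommGroup E] [Module ℝ E] [Module 𝕜 E] [IsScalarTower ℝ 𝕜 E] [IsTopologicalAddGroup E]
    [ContinuousSMul 𝕜 E] [LocallyConvexSpace ℝ E] {K : Set E} (hK : Convex ℝ K)
    {ι : Type*} {l : Filter ι} [l.NeBot] {x : ι → E} (hxK : ∀ i, x i ∈ K) {y : E}
    (hxy : ∀ φ : StrongDual 𝕜 E, Tendsto (fun i => φ (x i)) l (𝓝 (φ y))) :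
    y ∈ closure K := by
  have := IsScalarTower.continuousSMul (M := ℝ) (α := E) 𝕜
  by_contra hy
  obtain ⟨φ, u, hφK, hφy⟩ :=
    RCLike.geometric_hahn_banach_closed_point (𝕜 := 𝕜) hK.closure isClosed_closure hy
  obtain ⟨i, hi⟩ := (((RCLike.continuous_re.tendsto _).comp (hxy φ)).eventually
    (lt_mem_nhds hφy)).exists
  exact (hφK _ (subset_closure (hxK i))).not_gt hi

theorem tendsto_dual_pi {𝕜 σ E : Type*} [RCLike 𝕜] [Fintype σ] [DecidableEq σ]
    [TopologicalSpace E] [AddCommGroup E] [Module 𝕜 E] {ι : Type*} {l : Filter ι}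
    {x : ι → σ → E} {y : σ → E}
    (hxy : ∀ k (μ : StrongDual 𝕜 E), Tendsto (fun i => μ (x i k)) l (𝓝 (μ (y k))))
    (φ : StrongDual 𝕜 (σ → E)) : Tendsto (fun i => φ (x i)) l (𝓝 (φ y)) := by
  simp only [← φ.sum_comp_single]
  exact tendsto_finsetSum _ fun k _ => hxy k _

theorem mem_closure_pi_of_forall_finset {ι : Type*} {X : ι → Type*}
    [∀ i, TopologicalSpace (X i)] {S : Set (∀ i, X i)} {x : ∀ i, X i}
    (hx : ∀ s : Finset ι, s.restrict x ∈ closure (s.restrict '' S)) :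
    x ∈ closure S := by
  refine mem_closure_iff_nhds.2 fun U hU => ?_
  rw [nhds_pi, mem_pi'] at hU
  obtain ⟨s, t, ht, hsU⟩ := hU
  obtain ⟨-, hz, z, hzS, rfl⟩ := mem_closure_iff_nhds.1 (hx s) (univ.pi fun i : s => t i)
    (set_pi_mem_nhds finite_univ fun i _ => ht i)
  exact ⟨z, hsU fun i hi => hz ⟨i, hi⟩ trivial, hzS⟩

theorem id_mem_closure_image_mul_convexHull {𝕜 A ι : Type*} [RCLike 𝕜] [NonUnitalNormedRing A]
    [NormedSpace 𝕜 A] [IsScalarTower 𝕜 A A] [SMulCommClass 𝕜 A A] [NormedSpace ℝ A]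
    [IsScalarTower ℝ 𝕜 A] {l : Filter ι} [l.NeBot] {e : ι → A}
    (he : ∀ (a : A) (μ : StrongDual 𝕜 A), Tendsto (fun i => μ (e i * a - a)) l (𝓝 0)) :
    id ∈ closure ((fun f a => f * a) '' convexHull ℝ (range e)) := by
  classical
  refine mem_closure_pi_of_forall_finset fun s => ?_
  let L : A →ₗ[ℝ] s → A :=
    LinearMap.pi fun a => (LinearMap.mulRight 𝕜 (a : A)).restrictScalars ℝ
  rw [image_image]
  refine mem_closure_of_forall_tendsto_dual (𝕜 := 𝕜) (l := l)
    ((convex_convexHull ℝ _).linear_image L) (x := fun i => L (e i))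
    (fun i => mem_image_of_mem L (subset_convexHull ℝ _ (mem_range_self i)))
    (tendsto_dual_pi fun a μ => ?_)
  exact tendsto_sub_nhds_zero_iff.1 <| (he a μ).congr fun i => map_sub μ _ _

end

theorem stmt4_general {𝕜 A : Type*} [RCLike 𝕜] [NonUnitalNormedRing A]
    [NormedSpace 𝕜 A] [IsScalarTower 𝕜 A A] [SMulCommClass 𝕜 A A]
    (C : ℝ)
    (h : ∃ (ι : Type) (_ : Nonempty ι) (pre : Preorder ι),
      haveI := pre
      IsDirected ι (· ≤ ·) ∧
      ∃ e : ι → A, (∀ i, ‖e i‖ ≤ C) ∧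
        ∀ (a : A) (μ : A →L[𝕜] 𝕜),
          Tendsto (fun i => μ (e i * a - a)) atTop (nhds (0 : 𝕜))) :
    ∃ (ι : Type) (_ : Nonempty ι) (pre : Preorder ι),
      haveI := pre
      IsDirected ι (· ≤ ·) ∧
      ∃ f : ι → A, (∀ j, ‖f j‖ ≤ C) ∧
        ∀ a : A,
          Tendsto (fun j => ‖f j * a - a‖) atTop (nhds (0 : ℝ)) := by
  obtain ⟨ι, _, pre, _, e, he_norm, he⟩ := h
  let : NormedSpace ℝ A := NormedSpace.restrictScalars ℝ 𝕜 A
  have : IsScalarTower ℝ 𝕜 A := IsScalarTower.of_compHom ℝ 𝕜 A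
  set K := convexHull ℝ (Set.range e)
  have hK_norm : K ⊆ Metric.closedBall 0 C :=
    convexHull_min (Set.range_subset_iff.2 fun i => mem_closedBall_zero_iff.2 (he_norm i))
      (convex_closedBall 0 C)
  -- Weights `ι →₀ ℝ` parametrize `K` by a type in `Type`, where the index of the net must live.
  have hK_span : K ⊆ Set.range (Finsupp.linearCombination ℝ e) := by
    rw [← LinearMap.coe_range, Finsupp.range_linearCombination]
    exact convexHull_min Submodule.subset_span (Submodule.convex _)
  have hK_id : (comap (fun f a => f * a) (𝓝 id) ⊓ 𝓟 K).NeBot := by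
    rw [neBot_inf_comap_iff_map', map_principal]
    exact mem_closure_iff_clusterPt.1 (id_mem_closure_image_mul_convexHull he)
  obtain ⟨J, hJ, preJ, hdirJ, f, hfK, hf⟩ :=
    exists_directed_net_tendsto_of_subset_range hK_span hK_id
  refine ⟨J, hJ, preJ, hdirJ, f, fun j => mem_closedBall_zero_iff.1 (hK_norm (hfK j)), fun a => ?_⟩
  exact tendsto_iff_norm_sub_tendsto_zero.1 (tendsto_pi_nhds.1 (tendsto_comap_iff.1 hf) a)

/-- A Banach algebra (not necessarily unital) with a weak bounded left
approximate identity of bound `C` (a net `(e_i)` over a nonempty directed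
index set with `‖e_i‖ ≤ C` and `μ (e_i * a - a) → 0` for every `a` and every
continuous linear functional `μ`) has a bounded left approximate identity of
the same bound `C` (a net `(f_j)` with `‖f_j‖ ≤ C` and `‖f_j * a - a‖ → 0`
for every `a`). -/
theorem stmt4 {𝕜 A : Type*} [RCLike 𝕜] [NonUnitalNormedRing A]
    [NormedSpace 𝕜 A] [IsScalarTower 𝕜 A A] [SMulCommClass 𝕜 A A]
    [CompleteSpace A] (C : ℝ)
    (h : ∃ (ι : Type) (_ : Nonempty ι) (pre : Preorder ι),
      haveI := pre
      IsDirected ι (· ≤ ·) ∧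
      ∃ e : ι → A, (∀ i, ‖e i‖ ≤ C) ∧
        ∀ (a : A) (μ : A →L[𝕜] 𝕜),
          Tendsto (fun i => μ (e i * a - a)) atTop (nhds (0 : 𝕜))) :
    ∃ (ι : Type) (_ : Nonempty ι) (pre : Preorder ι),
      haveI := pre
      IsDirected ι (· ≤ ·) ∧
      ∃ f : ι → A, (∀ j, ‖f j‖ ≤ C) ∧
        ∀ a : A,
          Tendsto (fun j => ‖f j * a - a‖) atTop (nhds (0 : ℝ)) :=
  stmt4_general C h
end
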